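/- arXiv:2111.05425 — 2 statements merged into one kernel-verified Lean document; each statement's English description precedes it below -/
import Mathlib

section
/- Let G be a locally convex geometric graph in which every vertex has degree at least 2. Then for every vertex w ∈ V(G): Σ_{v ∈ V(G) : ℓ_v = w} |L'(v)| = α_ℓ(w)(α_ℓ(w) − 1)/2. -/
open scoped Classical

noncomputable section

abbrev Pt : Type := EuclideanSpace ℝ (Fin 2)

instance : Fact (Module.finrank ℝ Pt = 2) := ⟨finrank_euclideanSpace_fin⟩

noncomputable instance : Module.Oriented ℝ Pt (Fin 2) :=
  ⟨(EuclideanSpace.basisFun (Fin 2) ℝ).toBasis.orientation⟩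

/-- A (combinatorial datum of a) geometric graph: a finite set of vertices (points of the
plane) together with a finite set of edges (unordered pairs of points). -/
structure GeomGraph where
  verts : Finset Pt
  edges : Finset (Sym2 Pt)

/-- `G` is a geometric graph: edges are non-degenerate pairs of vertices, and the vertices
are in general position (no three collinear). -/
def GeomGraph.IsGeometric (G : GeomGraph) : Prop :=
  (∀ e ∈ G.edges, ¬ e.IsDiag ∧ ∀ p ∈ e, p ∈ G.verts) ∧
  ∀ p ∈ G.verts, ∀ q ∈ G.verts, ∀ r ∈ G.verts,
    p ≠ q → p ≠ r → q ≠ r → ¬ Collinear ℝ ({p, q, r} : Set Pt)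

/-- The closed straight-line segment realizing an edge. -/
def edgeSeg (e : Sym2 Pt) : Set Pt :=
  Sym2.lift ⟨fun u v => segment ℝ u v, fun u v => segment_symm ℝ u v⟩ e

/-- Two edges are disjoint if their closed segments do not intersect. -/
def EdgesDisjoint (e f : Sym2 Pt) : Prop := edgeSeg e ∩ edgeSeg f = ∅

/-- `DJedge G e` is the set of edges of `G` disjoint from `e`. -/
def DJedge (G : GeomGraph) (e : Sym2 Pt) : Finset (Sym2 Pt) :=
  G.edges.filter (fun f => EdgesDisjoint e f)

/-- `DJpairs G` is the set of unordered pairs of disjoint edges of `G`. -/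
def DJpairs (G : GeomGraph) : Finset (Sym2 (Sym2 Pt)) :=
  G.edges.sym2.filter (fun pr => ∃ e f, pr = s(e, f) ∧ EdgesDisjoint e f)

/-- The neighborhood of a vertex. -/
def nbhd (G : GeomGraph) (v : Pt) : Finset Pt :=
  G.verts.filter (fun w => s(v, w) ∈ G.edges)

/-- The degree of a vertex. -/
def deg (G : GeomGraph) (v : Pt) : ℕ := (nbhd G v).card

/-- A geometric graph is locally convex if every vertex lies outside the convex hull of
its neighborhood. -/
def GeomGraph.LocallyConvex (G : GeomGraph) : Prop :=
  ∀ v ∈ G.verts, v ∉ convexHull ℝ (nbhd G v : Set Pt)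

/-- The oriented angle `∠ x y z ∈ (-π, π]`, measured counterclockwise from the ray `yx`
to the ray `yz`. -/
def oangle (x y z : Pt) : ℝ := (EuclideanGeometry.oangle x y z).toReal


/-- `ℓ` and `r` assign to each vertex `v` its leftmost and rightmost neighbors `ℓ v` and
`r v`: the oriented angle `∠ (r v) v (ℓ v)` is the maximum of `∠ a v b` over `a, b ∈ N(v)`. -/
def IsLeftRight (G : GeomGraph) (ℓ r : Pt → Pt) : Prop :=
  ∀ v ∈ G.verts, ℓ v ∈ nbhd G v ∧ r v ∈ nbhd G v ∧
    ∀ a ∈ nbhd G v, ∀ b ∈ nbhd G v, oangle a v b ≤ oangle (r v) v (ℓ v)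

/-- `α_ℓ(v)`: the number of `w ∈ N(v)` with `ℓ w = v`. -/
def alphal (G : GeomGraph) (ℓ : Pt → Pt) (v : Pt) : ℕ :=
  ((nbhd G v).filter (fun w => ℓ w = v)).card

/-- `α_r(v)`: the number of `w ∈ N(v)` with `r w = v`. -/
def alphar (G : GeomGraph) (r : Pt → Pt) (v : Pt) : ℕ :=
  ((nbhd G v).filter (fun w => r w = v)).card

/-- `L'(v)`: the set of edges `(ℓ v) w ∈ E(G)` with `∠ w (ℓ v) v > 0` and `ℓ w = ℓ v`. -/
def Lpset (G : GeomGraph) (ℓ : Pt → Pt) (v : Pt) : Finset (Sym2 Pt) :=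
  G.edges.filter (fun e => ∃ w, e = s(ℓ v, w) ∧ 0 < oangle w (ℓ v) v ∧ ℓ w = ℓ v)

/-- `R'(v)`: the set of edges `(r v) w ∈ E(G)` with `∠ w (r v) v < 0` and `r w = r v`. -/
def Rpset (G : GeomGraph) (r : Pt → Pt) (v : Pt) : Finset (Sym2 Pt) :=
  G.edges.filter (fun e => ∃ w, e = s(r v, w) ∧ oangle w (r v) v < 0 ∧ r w = r v)


/-- Auxiliary: `toReal` of a negated angle, when the angle is not `π`. -/
lemma angle_neg_toReal {θ : Real.Angle} (h : θ ≠ (Real.pi : Real.Angle)) :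
    (-θ).toReal = -θ.toReal := by
  have h1 : θ.toReal ≤ Real.pi := θ.toReal_le_pi
  have h2 : -Real.pi < θ.toReal := θ.toReal_mem_Ioc.1
  have h3 : θ.toReal ≠ Real.pi := fun hc => h (Real.Angle.toReal_eq_pi_iff.mp hc)
  nth_rewrite 1 [← θ.coe_toReal]
  rw [← Real.Angle.coe_neg, Real.Angle.toReal_coe_eq_self_iff]
  constructor
  · have := lt_of_le_of_ne h1 h3; linarith
  · linarith

/-- **Equation (7).** For a locally convex geometric graph with minimum degree at least 2 and
any vertex `w`: `Σ_{v ∈ V(G) : ℓ_v = w} |L'(v)| = α_ℓ(w)(α_ℓ(w)−1)/2`. -/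
theorem sum_Lpset_over_fiber_eq (G : GeomGraph) (hG : G.IsGeometric)
    (hconv : G.LocallyConvex) (hdeg : ∀ v ∈ G.verts, 2 ≤ deg G v)
    (ℓ r : Pt → Pt) (hlr : IsLeftRight G ℓ r) :
    ∀ w ∈ G.verts,
      (∑ v ∈ G.verts.filter (fun v => ℓ v = w), ((Lpset G ℓ v).card : ℝ)) =
        (alphal G ℓ w : ℝ) * ((alphal G ℓ w : ℝ) - 1) / 2 := by
  intro w hw
  classical
  set S := (nbhd G w).filter (fun v => ℓ v = w) with hSdef
  have hSsub : ∀ v ∈ S, v ∈ G.verts ∧ s(w, v) ∈ G.edges ∧ ℓ v = w := by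
    intro v hv
    simp only [hSdef, nbhd, Finset.mem_filter] at hv
    exact ⟨hv.1.1, hv.1.2, hv.2⟩
  have hSne : ∀ v ∈ S, v ≠ w := by
    intro v hv hvw
    have hd := (hG.1 s(w, v) (hSsub v hv).2.1).1
    subst hvw
    exact hd (by simp)
  -- The fiber equals S
  have hfiber : G.verts.filter (fun v => ℓ v = w) = S := by
    ext v
    simp only [hSdef, nbhd, Finset.mem_filter]
    constructor
    · rintro ⟨hv, hl⟩
      have h1 := (hlr v hv).1
      rw [hl] at h1
      simp only [nbhd, Finset.mem_filter] at h1
      exact ⟨⟨hv, by rw [Sym2.eq_swap]; exact h1.2⟩, hl⟩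
    · rintro ⟨⟨hv, _⟩, hl⟩
      exact ⟨hv, hl⟩
  -- Lpset card equals a filter card
  have hcard : ∀ v ∈ S, (Lpset G ℓ v).card
      = (S.filter (fun t => 0 < oangle t w v)).card := by
    intro v hv
    obtain ⟨hvV, hvE, hvl⟩ := hSsub v hv
    have himg : Lpset G ℓ v
        = (S.filter (fun t => 0 < oangle t w v)).image (fun t => s(w, t)) := by
      ext e
      simp only [Lpset, Finset.mem_filter, Finset.mem_image, hvl]
      constructor
      · rintro ⟨he, t, rfl, hang, hlt⟩
        have htV : t ∈ G.verts := (hG.1 _ he).2 t (by simp)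
        refine ⟨t, ?_, rfl⟩
        simp only [hSdef, nbhd, Finset.mem_filter]
        exact ⟨⟨⟨htV, he⟩, hlt⟩, hang⟩
      · rintro ⟨t, ht, rfl⟩
        obtain ⟨hts, hang⟩ := ht
        obtain ⟨htV, htE, htl⟩ := hSsub t hts
        exact ⟨htE, t, rfl, hang, htl⟩
    rw [himg, Finset.card_image_of_injOn]
    intro a ha b hb hab
    simp only [Finset.mem_coe, Finset.mem_filter] at ha hb
    have haw : a ≠ w := hSne a ha.1
    have hbw : b ≠ w := hSne b hb.1
    exact Sym2.congr_right.mp hab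
  -- antisymmetry of the oriented angle predicate
  have hkey : ∀ v ∈ S, ∀ t ∈ S, t ≠ v → (oangle v w t = - oangle t w v ∧ oangle t w v ≠ 0) := by
    intro v hv t ht htv
    obtain ⟨hvV, _, _⟩ := hSsub v hv
    obtain ⟨htV, _, _⟩ := hSsub t ht
    have hcol : ¬ Collinear ℝ ({t, w, v} : Set Pt) :=
      hG.2 t htV w hw v hvV (hSne t ht) htv (hSne v hv).symm
    have h0pi : ¬ (EuclideanGeometry.oangle t w v = 0 ∨
        EuclideanGeometry.oangle t w v = Real.pi) := by
      rw [EuclideanGeometry.oangle_eq_zero_or_eq_pi_iff_collinear]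
      exact hcol
    push_neg at h0pi
    have hrev : EuclideanGeometry.oangle v w t = - EuclideanGeometry.oangle t w v :=
      EuclideanGeometry.oangle_rev t w v
    constructor
    · show (EuclideanGeometry.oangle v w t).toReal = -(EuclideanGeometry.oangle t w v).toReal
      rw [hrev, angle_neg_toReal h0pi.2]
    · show (EuclideanGeometry.oangle t w v).toReal ≠ 0
      intro hc
      exact h0pi.1 (Real.Angle.toReal_eq_zero_iff.mp hc)
  -- the angle from a point to itself is zero
  have hself : ∀ v, oangle v w v = 0 := by
    intro v
    show (EuclideanGeometry.oangle v w v).toReal = 0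
    rw [EuclideanGeometry.oangle_self_left_right, Real.Angle.toReal_zero]
  -- partition: for each v, positive-filter and negative-filter partition S.erase v
  have hpart : ∀ v ∈ S, (S.filter (fun t => 0 < oangle t w v)).card
      + (S.filter (fun t => 0 < oangle v w t)).card = S.card - 1 := by
    intro v hv
    have hdisj : Disjoint (S.filter (fun t => 0 < oangle t w v))
        (S.filter (fun t => 0 < oangle v w t)) := by
      rw [Finset.disjoint_left]
      intro t ht1 ht2
      simp only [Finset.mem_filter] at ht1 ht2
      by_cases htv : t = v
      · subst htv
        exact absurd ht1.2 (by rw [hself]; exact lt_irrefl 0)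
      · obtain ⟨heq, _⟩ := hkey v hv t ht1.1 htv
        rw [heq] at ht2
        linarith [ht1.2, ht2.2]
    have hunion : (S.filter (fun t => 0 < oangle t w v))
        ∪ (S.filter (fun t => 0 < oangle v w t)) = S.erase v := by
      ext t
      simp only [Finset.mem_union, Finset.mem_filter, Finset.mem_erase]
      constructor
      · rintro (⟨ht, hp⟩ | ⟨ht, hp⟩)
        · refine ⟨fun h => ?_, ht⟩
          subst h
          rw [hself] at hp
          exact lt_irrefl 0 hp
        · refine ⟨fun h => ?_, ht⟩
          subst h
          rw [hself] at hp
          exact lt_irrefl 0 hp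
      · rintro ⟨htv, ht⟩
        obtain ⟨heq, hne⟩ := hkey v hv t ht htv
        rcases lt_trichotomy (oangle t w v) 0 with h | h | h
        · right; exact ⟨ht, by rw [heq]; linarith⟩
        · exact absurd h hne
        · left; exact ⟨ht, h⟩
    have hcu := Finset.card_union_of_disjoint hdisj
    rw [hunion, Finset.card_erase_of_mem hv] at hcu
    omega
  -- double counting
  have hswap : ∑ v ∈ S, (S.filter (fun t => 0 < oangle t w v)).card
      = ∑ v ∈ S, (S.filter (fun t => 0 < oangle v w t)).card := by
    simp_rw [Finset.card_filter]
    exact Finset.sum_comm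
  have htotal : 2 * ∑ v ∈ S, (S.filter (fun t => 0 < oangle t w v)).card
      = S.card * (S.card - 1) := by
    rw [two_mul]
    nth_rewrite 2 [hswap]
    rw [← Finset.sum_add_distrib, Finset.sum_congr rfl hpart, Finset.sum_const, smul_eq_mul]
  -- conclude
  rw [hfiber]
  have hsum : (∑ v ∈ S, ((Lpset G ℓ v).card : ℝ))
      = ((∑ v ∈ S, (S.filter (fun t => 0 < oangle t w v)).card : ℕ) : ℝ) := by
    push_cast
    exact Finset.sum_congr rfl fun v hv => by rw [hcard v hv]
  have halpha : alphal G ℓ w = S.card := rfl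
  rw [hsum, halpha]
  rcases Nat.eq_zero_or_pos S.card with h0 | h1
  · have hS0 : S = ∅ := Finset.card_eq_zero.mp h0
    rw [hS0]
    simp
  · have hc : ((2 * ∑ v ∈ S, (S.filter (fun t => 0 < oangle t w v)).card : ℕ) : ℝ)
        = ((S.card * (S.card - 1) : ℕ) : ℝ) := by exact_mod_cast htotal
    push_cast [Nat.cast_sub h1] at hc
    push_cast
    linarith


end
end

section
/- Let m be a non-negative integer and let G be a geometric graph such that |DJ(uv)| ≤ m for every edge uv ∈ E(G). If G has a non-convex vertex (a vertex v lying inside the convex hull of N(v)), then |E(G)| ≤ |V(G)| + 3m − 1. -/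
open scoped Classical

noncomputable section

/-! ### Auxiliary lemmas -/


/-- Signed area form: twice the signed area of the triangle `x y p`. -/
def sarea (x y p : Pt) : ℝ :=
  (p 0 - x 0) * (y 1 - x 1) - (p 1 - x 1) * (y 0 - x 0)

lemma sarea_self_left (x y : Pt) : sarea x y x = 0 := by simp [sarea]

lemma sarea_self_right (x y : Pt) : sarea x y y = 0 := by simp [sarea]; ring

lemma coord_smul_add (a b : ℝ) (p q : Pt) (i : Fin 2) :
    (a • p + b • q) i = a * p i + b * q i := rfl

lemma sarea_affine (x y p q : Pt) (a b : ℝ) (hab : a + b = 1) :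
    sarea x y (a • p + b • q) = a * sarea x y p + b * sarea x y q := by
  have hb : b = 1 - a := by linarith
  subst hb
  simp only [sarea, coord_smul_add]
  ring

lemma coord_sum {ι : Type} (s : Finset ι) (w : ι → ℝ) (z : ι → Pt) (j : Fin 2) :
    (∑ i ∈ s, w i • z i) j = ∑ i ∈ s, w i * z i j := by
  classical
  induction s using Finset.induction with
  | empty => simp
  | insert _ _ h ih => simp [Finset.sum_insert h, ih, PiLp.add_apply]

lemma sarea_sum {ι : Type} (s : Finset ι) (w : ι → ℝ) (z : ι → Pt)
    (hw : ∑ i ∈ s, w i = 1) (x y : Pt) :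
    sarea x y (∑ i ∈ s, w i • z i) = ∑ i ∈ s, w i * sarea x y (z i) := by
  have expand : ∑ i ∈ s, w i * sarea x y (z i)
      = (∑ i ∈ s, w i * z i 0) * (y 1 - x 1) - (∑ i ∈ s, w i * z i 1) * (y 0 - x 0)
        - (∑ i ∈ s, w i) * (x 0 * (y 1 - x 1) - x 1 * (y 0 - x 0)) := by
    rw [Finset.sum_mul, Finset.sum_mul, Finset.sum_mul, ← Finset.sum_sub_distrib,
      ← Finset.sum_sub_distrib]
    refine Finset.sum_congr rfl fun i _ => ?_
    simp only [sarea]; ring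
  rw [expand, hw]
  simp only [sarea, coord_sum]
  ring

lemma collinear_of_sarea_eq_zero {x y p : Pt} (h : sarea x y p = 0) :
    Collinear ℝ ({p, x, y} : Set Pt) := by
  by_cases hd : y 0 - x 0 = 0 ∧ y 1 - x 1 = 0
  · have hxy : y = x := by
      ext i; fin_cases i
      · have := hd.1; simpa using by linarith
      · have := hd.2; simpa using by linarith
    have : ({p, x, y} : Set Pt) = {p, x} := by rw [hxy]; simp
    rw [this]
    exact collinear_pair ℝ p x
  · have key : ∃ r : ℝ, p = r • (y - x) + x := by
      rcases not_and_or.mp hd with hd0 | hd1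
      · refine ⟨(p 0 - x 0) / (y 0 - x 0), ?_⟩
        have hsub : ∀ i, (y - x) i = y i - x i := fun i => rfl
        ext i; fin_cases i
        · show p 0 = ((p 0 - x 0) / (y 0 - x 0)) • ((y - x) 0) + x 0
          rw [hsub, smul_eq_mul, div_mul_cancel₀ _ hd0]; ring
        · show p 1 = ((p 0 - x 0) / (y 0 - x 0)) • ((y - x) 1) + x 1
          rw [hsub]
          simp only [smul_eq_mul, sarea] at *
          field_simp
          linarith [h]
      · refine ⟨(p 1 - x 1) / (y 1 - x 1), ?_⟩
        have hsub : ∀ i, (y - x) i = y i - x i := fun i => rfl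
        ext i; fin_cases i
        · show p 0 = ((p 1 - x 1) / (y 1 - x 1)) • ((y - x) 0) + x 0
          rw [hsub]
          simp only [smul_eq_mul, sarea] at *
          field_simp
          linarith [h]
        · show p 1 = ((p 1 - x 1) / (y 1 - x 1)) • ((y - x) 1) + x 1
          rw [hsub, smul_eq_mul, div_mul_cancel₀ _ hd1]; ring
    obtain ⟨r, hr⟩ := key
    rw [collinear_iff_of_mem (show x ∈ ({p, x, y} : Set Pt) by simp)]
    refine ⟨y - x, ?_⟩
    rintro q (rfl | rfl | rfl)
    · exact ⟨r, hr⟩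
    · exact ⟨0, by simp⟩
    · exact ⟨1, by simp⟩

lemma edgeSeg_mk (x y : Pt) : edgeSeg s(x, y) = segment ℝ x y := rfl

/-- Key geometric lemma: if `v` is a convex combination of the `u ∈ t` and all the
segments `v u` are edges, then any edge avoiding `v` is disjoint from one of them. -/
lemma key_lemma (G : GeomGraph) (hG : G.IsGeometric) {v : Pt} (hvV : v ∈ G.verts)
    {t : Finset Pt} {w : Pt → ℝ}
    (hw0 : ∀ u ∈ t, 0 ≤ w u) (hws : ∑ u ∈ t, w u = 1)
    (hwc : ∑ u ∈ t, w u • u = v) {e : Sym2 Pt} (he : e ∈ G.edges) (hve : v ∉ e) :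
    ∃ u ∈ t, EdgesDisjoint s(v, u) e := by
  revert he hve
  induction e using Sym2.ind with
  | _ x y =>
  intro he hve
  have hxy : x ≠ y := by
    have := (hG.1 _ he).1
    simpa [Sym2.mk_isDiag_iff] using this
  have hxV : x ∈ G.verts := (hG.1 _ he).2 x (by simp)
  have hyV : y ∈ G.verts := (hG.1 _ he).2 y (by simp)
  have hvx : v ≠ x := by rintro rfl; exact hve (by simp)
  have hvy : v ≠ y := by rintro rfl; exact hve (by simp)
  have hncol : ¬ Collinear ℝ ({v, x, y} : Set Pt) := hG.2 v hvV x hxV y hyV hvx hvy hxy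
  have hFv : sarea x y v ≠ 0 := fun h => hncol (collinear_of_sarea_eq_zero h)
  set σ : ℝ := if sarea x y v < 0 then 1 else -1 with hσ
  have hσv : σ * sarea x y v < 0 := by
    rcases lt_or_gt_of_ne hFv with h | h
    · rw [hσ, if_pos h]; linarith
    · rw [hσ, if_neg (not_lt.2 h.le)]; nlinarith
  have hsum : σ * sarea x y v = ∑ u ∈ t, w u * (σ * sarea x y u) := by
    calc σ * sarea x y v = σ * ∑ u ∈ t, w u * sarea x y u := by
          rw [← hwc, sarea_sum t w (fun u => u) hws]
      _ = ∑ u ∈ t, w u * (σ * sarea x y u) := by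
          rw [Finset.mul_sum]; exact Finset.sum_congr rfl fun _ _ => by ring
  obtain ⟨u, hut, hu⟩ : ∃ u ∈ t, σ * sarea x y u < 0 := by
    by_contra hc
    push_neg at hc
    have h0 : (0 : ℝ) ≤ ∑ u ∈ t, w u * (σ * sarea x y u) :=
      Finset.sum_nonneg fun u hu => mul_nonneg (hw0 u hu) (hc u hu)
    rw [← hsum] at h0
    linarith
  refine ⟨u, hut, ?_⟩
  rw [EdgesDisjoint, edgeSeg_mk, edgeSeg_mk, Set.eq_empty_iff_forall_notMem]
  rintro p ⟨hp1, hp2⟩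
  obtain ⟨a, b, ha, hb, hab, rfl⟩ := hp1
  have h1 : sarea x y (a • v + b • u) = a * sarea x y v + b * sarea x y u :=
    sarea_affine x y v u a b hab
  obtain ⟨a', b', ha', hb', hab', hq⟩ := hp2
  have h2 : sarea x y (a • v + b • u) = 0 := by
    rw [← hq, sarea_affine x y x y a' b' hab', sarea_self_left, sarea_self_right]
    ring
  rw [h2] at h1
  have hσa : σ * (a * sarea x y v + b * sarea x y u) < 0 := by
    have hA : a * (σ * sarea x y v) ≤ 0 := mul_nonpos_of_nonneg_of_nonpos ha hσv.le
    have hB : b * (σ * sarea x y u) ≤ 0 := mul_nonpos_of_nonneg_of_nonpos hb hu.le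
    rcases lt_or_eq_of_le ha with ha0 | ha0
    · nlinarith
    · have hb1 : b = 1 := by linarith
      rw [← ha0, hb1]; nlinarith
  rw [← h1] at hσa
  simp at hσa

/-- **Theorem 1, Case 2.** If `G` is a geometric graph in which every edge is disjoint from
at most `m` other edges and `G` has a non-convex vertex, then `|E(G)| ≤ |V(G)| + 3m − 1`. -/
theorem edge_bound_of_nonconvex_vertex (m : ℕ) (G : GeomGraph) (hG : G.IsGeometric)
    (hm : ∀ e ∈ G.edges, (DJedge G e).card ≤ m)
    (hv : ∃ v ∈ G.verts, v ∈ convexHull ℝ (nbhd G v : Set Pt)) :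
    (G.edges.card : ℝ) ≤ (G.verts.card : ℝ) + 3 * m - 1 := by
  classical
  obtain ⟨v, hvV, hvC⟩ := hv
  rw [convexHull_eq_union] at hvC
  simp only [Set.mem_iUnion] at hvC
  obtain ⟨t, hts, hai, hvt⟩ := hvC
  have htcard : t.card ≤ 3 := by
    have h1 := hai.card_le_finrank_succ
    have h2 : Module.finrank ℝ (vectorSpan ℝ (Set.range ((↑) : t → Pt))) ≤ Module.finrank ℝ Pt :=
      Submodule.finrank_le _
    have h3 : Module.finrank ℝ Pt = 2 := finrank_euclideanSpace_fin
    rw [Fintype.card_coe] at h1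
    omega
  rw [Finset.convexHull_eq] at hvt
  obtain ⟨w, hw0, hw1, hwc⟩ := hvt
  have hws : ∑ u ∈ t, w u • u = v := by
    rw [← hwc, Finset.centerMass_eq_of_sum_1 _ _ hw1]
    simp
  set Ev := G.edges.filter (fun e => v ∈ e) with hEvdef
  set Env := G.edges.filter (fun e => ¬ v ∈ e) with hEnvdef
  have hsplit : Ev.card + Env.card = G.edges.card :=
    Finset.card_filter_add_card_filter_not _
  have hEv : Ev.card ≤ G.verts.card - 1 := by
    have hmap : Ev.card ≤ (G.verts.erase v).card := by
      apply Finset.card_le_card_of_injOn (fun e => if h : v ∈ e then Sym2.Mem.other' h else v)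
      · intro e heEv
        rw [Finset.mem_coe, Finset.mem_filter] at heEv
        obtain ⟨heE, hveE⟩ := heEv
        simp only [Finset.mem_coe]; rw [dif_pos hveE]
        refine Finset.mem_erase.2 ⟨?_, ?_⟩
        · have := Sym2.other_ne (hG.1 _ heE).1 hveE
          rwa [Sym2.other_eq_other'] at this
        · exact (hG.1 _ heE).2 _ (Sym2.other_mem' hveE)
      · intro e1 h1 e2 h2 hfe
        have h1' := Finset.mem_coe.1 h1
        have h2' := Finset.mem_coe.1 h2
        rw [Finset.mem_filter] at h1' h2'
        simp only [] at hfe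
        rw [dif_pos h1'.2, dif_pos h2'.2] at hfe
        rw [← Sym2.other_spec' h1'.2, ← Sym2.other_spec' h2'.2, hfe]
    rwa [Finset.card_erase_of_mem hvV] at hmap
  have hEnv : Env.card ≤ 3 * m := by
    have hsub : Env ⊆ t.biUnion (fun u => DJedge G s(v, u)) := by
      intro e heE
      rw [hEnvdef, Finset.mem_filter] at heE
      obtain ⟨u, hut, hdisj⟩ := key_lemma G hG hvV hw0 hw1 hws heE.1 heE.2
      rw [Finset.mem_biUnion]
      exact ⟨u, hut, by rw [DJedge, Finset.mem_filter]; exact ⟨heE.1, hdisj⟩⟩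
    calc Env.card ≤ (t.biUnion (fun u => DJedge G s(v, u))).card := Finset.card_le_card hsub
      _ ≤ ∑ u ∈ t, (DJedge G s(v, u)).card := Finset.card_biUnion_le
      _ ≤ ∑ _u ∈ t, m := by
          refine Finset.sum_le_sum fun u hu => hm _ ?_
          have : u ∈ nbhd G v := by
            have := hts (Finset.mem_coe.2 hu)
            exact Finset.mem_coe.1 this
          rw [nbhd, Finset.mem_filter] at this
          exact this.2
      _ = t.card * m := by rw [Finset.sum_const, smul_eq_mul]
      _ ≤ 3 * m := Nat.mul_le_mul_right m htcard
  have hV1 : 1 ≤ G.verts.card := Finset.card_pos.2 ⟨v, hvV⟩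
  have hE : G.edges.card ≤ (G.verts.card - 1) + 3 * m := by omega
  have hc : (G.edges.card : ℝ) ≤ ((G.verts.card - 1 + 3 * m : ℕ) : ℝ) := Nat.cast_le.2 hE
  rw [Nat.cast_add, Nat.cast_sub hV1] at hc
  push_cast at hc ⊢
  linarith
end
end
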